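/- arXiv:2203.04216 — 2 statements merged into one kernel-verified Lean document; each statement's English description precedes it below -/
import Mathlib

section
/- For positive integers i and j, gcd(2^i - 1, 2^j + 1) = 1 if and only if the 2-adic valuation of i is at most the 2-adic valuation of j. -/
/-!
Write `j = 2 ^ k * m` with `m` odd. If `k < v₂ i`, the Fermat number `F_k = 2 ^ 2 ^ k + 1`
divides `2 ^ j + 1` (as `m` is odd) and `2 ^ 2 ^ (k + 1) - 1 = (2 ^ 2 ^ k - 1) F_k`, which
divides `2 ^ i - 1`. Conversely, a common divisor of `2 ^ i - 1` and `2 ^ j + 1` divides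
`gcd (2 ^ i - 1, 2 ^ (2 j) - 1) = 2 ^ gcd (i, 2 j) - 1`; when `v₂ i ≤ v₂ j` the exponent
`gcd (i, 2 j)` divides `j`, so the divisor also divides `2 ^ j - 1`, hence `2`, and it is odd.
-/

lemma padicValNat_two_pow_mul_odd {k m : ℕ} (hm : Odd m) : padicValNat 2 (2 ^ k * m) = k := by
  rw [padicValNat.mul (pow_ne_zero k two_ne_zero) (by rintro rfl; simp at hm),
    padicValNat.prime_pow, padicValNat.eq_zero_of_not_dvd hm.not_two_dvd_nat, add_zero]

lemma dvd_of_dvd_two_mul_of_padicValNat_le {d n : ℕ} (h : d ∣ 2 * n)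
    (hv : padicValNat 2 d ≤ padicValNat 2 n) : d ∣ n := by
  rcases eq_or_ne n 0 with rfl | hn
  · exact dvd_zero d
  obtain ⟨k, m, hm, rfl⟩ := Nat.exists_eq_two_pow_mul_odd (ne_zero_of_dvd_ne_zero (by omega) h)
  rw [padicValNat_two_pow_mul_odd hm] at hv
  have hm2 : Nat.Coprime 2 m := Nat.coprime_two_left.mpr hm
  refine (hm2.pow_left k).mul_dvd_of_dvd_of_dvd ((pow_dvd_pow 2 hv).trans pow_padicValNat_dvd) ?_
  exact hm2.symm.dvd_of_dvd_mul_left ((Dvd.intro_left _ rfl).trans h)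

lemma fermatNumber_dvd_two_pow_add_one {k m : ℕ} (hm : Odd m) :
    Nat.fermatNumber k ∣ 2 ^ (2 ^ k * m) + 1 := by
  simpa [Nat.fermatNumber, pow_mul] using hm.nat_add_dvd_pow_add_pow (2 ^ 2 ^ k) 1

lemma fermatNumber_dvd_two_pow_sub_one {k n : ℕ} (h : 2 ^ (k + 1) ∣ n) :
    Nat.fermatNumber k ∣ 2 ^ n - 1 := by
  have hF : Nat.fermatNumber k ∣ 2 ^ 2 ^ (k + 1) - 1 :=
    ⟨2 ^ 2 ^ k - 1, by
      rw [Nat.fermatNumber, pow_succ, pow_mul, ← one_pow 2, Nat.sq_sub_sq, one_pow]⟩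
  exact hF.trans (Nat.pow_sub_one_dvd_pow_sub_one 2 h)

lemma fermatNumber_dvd_gcd_of_padicValNat_lt {i j : ℕ} (hj : 0 < j)
    (h : padicValNat 2 j < padicValNat 2 i) :
    Nat.fermatNumber (padicValNat 2 j) ∣ Nat.gcd (2 ^ i - 1) (2 ^ j + 1) := by
  obtain ⟨k, m, hm, rfl⟩ := Nat.exists_eq_two_pow_mul_odd hj.ne'
  rw [padicValNat_two_pow_mul_odd hm] at h ⊢
  exact Nat.dvd_gcd (fermatNumber_dvd_two_pow_sub_one ((pow_dvd_pow 2 h).trans pow_padicValNat_dvd))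
    (fermatNumber_dvd_two_pow_add_one hm)

lemma gcd_two_pow_sub_one_two_pow_add_one_eq_one {i j : ℕ} (hi : 0 < i)
    (h : padicValNat 2 i ≤ padicValNat 2 j) : Nat.gcd (2 ^ i - 1) (2 ^ j + 1) = 1 := by
  set g := Nat.gcd (2 ^ i - 1) (2 ^ j + 1)
  have hg_odd : Odd g := (Nat.Even.sub_odd Nat.one_le_two_pow
    ((Nat.even_pow' hi.ne').mpr even_two) odd_one).of_dvd_nat (Nat.gcd_dvd_left _ _)
  have h_sq : 2 ^ j + 1 ∣ 2 ^ (2 * j) - 1 :=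
    ⟨2 ^ j - 1, by rw [pow_mul', ← one_pow 2, Nat.sq_sub_sq, one_pow]⟩
  have hv : padicValNat 2 (Nat.gcd i (2 * j)) ≤ padicValNat 2 i :=
    (padicValNat_dvd_iff_le hi.ne').mp (pow_padicValNat_dvd.trans (Nat.gcd_dvd_left _ _))
  have h_exp : Nat.gcd i (2 * j) ∣ j :=
    dvd_of_dvd_two_mul_of_padicValNat_le (Nat.gcd_dvd_right _ _) (hv.trans h)
  have hg_sub : g ∣ 2 ^ j - 1 :=
    calc g ∣ Nat.gcd (2 ^ i - 1) (2 ^ (2 * j) - 1) := Nat.gcd_dvd_gcd_of_dvd_right _ h_sq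
      _ = 2 ^ Nat.gcd i (2 * j) - 1 := Nat.pow_sub_one_gcd_pow_sub_one 2 i (2 * j)
      _ ∣ 2 ^ j - 1 := Nat.pow_sub_one_dvd_pow_sub_one 2 h_exp
  have hg_two : g ∣ 2 := by
    have := Nat.dvd_sub (Nat.gcd_dvd_right _ _) hg_sub
    rwa [show 2 ^ j + 1 - (2 ^ j - 1) = 2 by have := @Nat.one_le_two_pow j; omega] at this
  rcases (Nat.dvd_prime Nat.prime_two).mp hg_two with hg | hg
  · exact hg
  · exact absurd (hg ▸ hg_odd) (by decide)

theorem stmt_1 (i j : ℕ) (hi : 0 < i) (hj : 0 < j) :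
    Nat.gcd (2 ^ i - 1) (2 ^ j + 1) = 1 ↔ padicValNat 2 i ≤ padicValNat 2 j := by
  refine ⟨fun hgcd => ?_, gcd_two_pow_sub_one_two_pow_add_one_eq_one hi⟩
  by_contra! h
  have hF := fermatNumber_dvd_gcd_of_padicValNat_lt hj h
  rw [hgcd] at hF
  exact Nat.fermatNumber_ne_one _ (Nat.eq_one_of_dvd_one hF)
end

section
/- Let q be a prime power and n a positive integer. Let Δ be the set of all elements (w^q - w)^{q-1} with w ∈ F_{q^n} \ F_q. Then |Δ| = (q^{n-1} - 1)/(q - 1), and in F_{q^n}[Y] one has ∏_{z ∈ F_{q^n}^*} (1 + z - z^q Y) = - ((Y^{q^n} - Y)/(Y^{(q^n-1)/(q-1)} - 1)) · ∏_{u ∈ Δ} (Y - u)^q. -/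
/-! For `z ≠ 0` write `1 + z - z^q Y = -z^q (Y - a)` with `a = (1 + z) / z^q`; the `z` giving a
fixed `a` are the solutions of `L_a z = 1`, where `L_a z = a z^q - z` is additive. Put
`e = (q^n - 1) / (q - 1)`. If `a^e ≠ 1`, then `L_a` is injective, so `a` occurs exactly once,
and these `a` are the roots of `(Y^{q^n} - Y) / (Y^e - 1)`. If `a^e = 1`, then `a = s^{q-1}`
and `ker L_a = s⁻¹ 𝔽_q` has `q` elements, while `L_a z = 1` is solvable iff `a ∈ Δ` (put
`w = s z`, so that `w^q - w = s`); hence `a` occurs `q` times if `a ∈ Δ` and never otherwise.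
The constants multiply to `(∏ z)^q = (-1)^q = -1` by Wilson's theorem, and counting the
`q^n - 1` values of `z` gives `q |Δ| = e - 1`. -/

open Polynomial Finset

theorem IsCyclic.exists_pow_eq_of_pow_eq_one {G : Type*} [Group G] [IsCyclic G] [Finite G]
    {k e : ℕ} (he : 0 < e) (hke : k * e = Nat.card G) {a : G} (ha : a ^ e = 1) :
    ∃ s : G, s ^ k = a := by
  obtain ⟨g, hg⟩ := IsCyclic.exists_generator (α := G)
  obtain ⟨j, rfl⟩ : a ∈ Submonoid.powers g := mem_powers_iff_mem_zpowers.mpr (hg a)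
  have hdvd : k * e ∣ j * e := by
    rw [hke, ← orderOf_eq_card_of_forall_mem_zpowers hg]
    exact orderOf_dvd_of_pow_eq_one (by rwa [pow_mul])
  obtain ⟨c, rfl⟩ := Nat.dvd_of_mul_dvd_mul_right he hdvd
  exact ⟨g ^ c, by rw [← pow_mul, mul_comm]⟩

namespace FiniteField

variable {F : Type*} [Field F] [Fintype F]

theorem pos_of_dvd_card_sub_one {d : ℕ} (hd : d ∣ Fintype.card F - 1) : 0 < d :=
  Nat.pos_of_dvd_of_pos hd (by have := Fintype.one_lt_card (α := F); omega)

theorem exists_pow_eq_of_pow_eq_one {k e : ℕ} (he : 0 < e) (hke : k * e = Fintype.card F - 1)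
    {a : F} (ha : a ^ e = 1) : ∃ s : F, s ≠ 0 ∧ s ^ k = a := by
  have ha0 : a ≠ 0 := by rintro rfl; simp [he.ne'] at ha
  obtain ⟨s, hs⟩ := IsCyclic.exists_pow_eq_of_pow_eq_one (G := Fˣ) he
    (by rw [hke, Nat.card_units, Nat.card_eq_fintype_card]) (a := Units.mk0 a ha0)
    (Units.ext (by simpa using ha))
  exact ⟨s, s.ne_zero, by simpa using congrArg Units.val hs⟩

theorem exists_isPrimitiveRoot_of_dvd {d : ℕ} (hd : d ∣ Fintype.card F - 1) :
    ∃ ζ : F, IsPrimitiveRoot ζ d := by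
  obtain ⟨g, hg⟩ := IsCyclic.exists_generator (α := Fˣ)
  have hg : IsPrimitiveRoot (g : F) (Fintype.card F - 1) := by
    rw [IsPrimitiveRoot.coe_units_iff, ← Nat.card_eq_fintype_card, ← Nat.card_units,
      ← orderOf_eq_card_of_forall_mem_zpowers hg]
    exact IsPrimitiveRoot.orderOf g
  obtain ⟨c, hc⟩ := hd
  exact ⟨_, hg.pow (by have := Fintype.one_lt_card (α := F); omega) (hc.trans (mul_comm d c))⟩

theorem prod_univ_X_sub_C : ∏ a : F, (X - C a) = X ^ Fintype.card F - X := by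
  have hcard := Fintype.one_lt_card (α := F)
  have hmonic : (X ^ Fintype.card F - X : F[X]).Monic :=
    monic_X_pow_sub (by rw [degree_X]; exact_mod_cast hcard)
  have hroots := roots_X_pow_card_sub_X F
  conv_rhs => rw [← prod_multiset_X_sub_C_of_monic_of_roots_card_eq hmonic
    (by rw [hroots, X_pow_card_sub_X_natDegree_eq F hcard]; rfl), hroots]
  rfl

theorem pow_eq_one_of_mul_pow_eq_self {q e : ℕ} (he : e * (q - 1) = Fintype.card F - 1)
    {a d : F} (hd : d ≠ 0) (h : a * d ^ q = d) : a ^ e = 1 := by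
  have hq := pos_of_dvd_card_sub_one ⟨e, by rw [← he, mul_comm]⟩
  have had : a * d ^ (q - 1) = 1 := by
    rw [← Nat.sub_add_cancel (by omega : 1 ≤ q), pow_succ, ← mul_assoc] at h
    exact (mul_eq_right₀ hd).mp h
  calc a ^ e = a ^ e * (d ^ (q - 1)) ^ e := by
        rw [← pow_mul, mul_comm (q - 1) e, he, pow_card_sub_one_eq_one d hd, mul_one]
    _ = 1 := by rw [← mul_pow, had, one_pow]

variable [DecidableEq F]

theorem filter_pow_eq_one_eq_nthRootsFinset {e : ℕ} (he : 0 < e) :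
    ({a | a ^ e = 1} : Finset F) = nthRootsFinset e (1 : F) := by
  ext a
  simp [mem_nthRootsFinset he]

theorem card_filter_pow_eq_one {e : ℕ} (he : e ∣ Fintype.card F - 1) :
    #{a : F | a ^ e = 1} = e := by
  obtain ⟨ζ, hζ⟩ := exists_isPrimitiveRoot_of_dvd he
  rw [filter_pow_eq_one_eq_nthRootsFinset (pos_of_dvd_card_sub_one he), hζ.card_nthRootsFinset]

theorem prod_filter_pow_eq_one_X_sub_C {e : ℕ} (he : e ∣ Fintype.card F - 1) :
    ∏ a : F with a ^ e = 1, (X - C a) = X ^ e - 1 := by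
  obtain ⟨ζ, hζ⟩ := exists_isPrimitiveRoot_of_dvd he
  have he0 := pos_of_dvd_card_sub_one he
  rw [filter_pow_eq_one_eq_nthRootsFinset he0, X_pow_sub_one_eq_prod he0 hζ]

theorem card_filter_pow_eq_self {q : ℕ} (hq : q - 1 ∣ Fintype.card F - 1) :
    #{c : F | c ^ q = c} = q := by
  have hq0 := pos_of_dvd_card_sub_one hq
  have hsplit : ({c | c ^ q = c} : Finset F) = insert 0 ({c | c ^ (q - 1) = 1} : Finset F) := by
    ext c
    rcases eq_or_ne c 0 with rfl | hc
    · simp [zero_pow (by omega : q ≠ 0)]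
    · have hpow : c ^ q = c ^ (q - 1) * c := by
        rw [← pow_succ, Nat.sub_add_cancel (by omega : 1 ≤ q)]
      simp [hc, hpow]
  rw [hsplit, card_insert_of_notMem (by simp [hq0.ne']), card_filter_pow_eq_one hq]
  omega

theorem prod_filter_ne_zero_id : ∏ z : F with z ≠ 0, z = -1 := by
  rw [prod_subtype _ (fun _ => mem_filter_univ _), ← Equiv.prod_comp (unitsEquivNeZero)]
  simpa using congrArg Units.val (prod_univ_units_id_eq_neg_one (K := F))

theorem X_pow_card_sub_X_divByMonic {e : ℕ} (he : e ∣ Fintype.card F - 1) :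
    (X ^ Fintype.card F - X) /ₘ (X ^ e - 1) = ∏ a : F with a ^ e ≠ 1, (X - C a) := by
  rw [← prod_univ_X_sub_C, ← prod_filter_mul_prod_filter_not univ (· ^ e = 1),
    prod_filter_pow_eq_one_X_sub_C he, mul_divByMonic_cancel_left _
      (by simpa using monic_X_pow_sub_C (1 : F) (pos_of_dvd_card_sub_one he).ne')]

end FiniteField

theorem Nat.pow_succ_sub_one_div {q : ℕ} (hq : 2 ≤ q) (n : ℕ) :
    (q ^ (n + 1) - 1) / (q - 1) = q * ((q ^ n - 1) / (q - 1)) + 1 := by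
  rw [← Nat.geomSum_eq hq, ← Nat.geomSum_eq hq, geom_sum_succ]

theorem mul_pow_sub_mul_eq {R : Type*} [CommRing R] {q : ℕ} (hq : 0 < q) (s z : R) :
    (s * z) ^ q - s * z = s * (s ^ (q - 1) * z ^ q - z) := by
  obtain ⟨r, rfl⟩ := Nat.exists_eq_add_one_of_ne_zero hq.ne'
  rw [Nat.add_sub_cancel]
  ring

section TwistedArtinSchreier

variable {F : Type*} [Field F] (p : ℕ) [ExpChar F p]

def twistedArtinSchreier (m : ℕ) (a : F) : F →+ F :=
  AddMonoidHom.mk' (fun z => a * z ^ p ^ m - z) fun x y => by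
    simp only [add_pow_expChar_pow]
    ring

@[simp]
theorem twistedArtinSchreier_apply (m : ℕ) (a z : F) :
    twistedArtinSchreier p m a z = a * z ^ p ^ m - z :=
  rfl

end TwistedArtinSchreier

section FrobeniusDifference

variable {F : Type*} [Field F] [Fintype F] [DecidableEq F]

def deltaSet (q : ℕ) : Finset F :=
  image (fun w : F => (w ^ q - w) ^ (q - 1)) {w | w ^ q ≠ w}

def solCount (q : ℕ) (a : F) : ℕ :=
  #{z : F | a * z ^ q - z = 1}

theorem pow_eq_one_of_mem_deltaSet {q e : ℕ} (he : e * (q - 1) = Fintype.card F - 1) {a : F}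
    (ha : a ∈ deltaSet q) : a ^ e = 1 := by
  obtain ⟨w, hw, rfl⟩ := mem_image.mp ha
  rw [← pow_mul, mul_comm, he]
  exact FiniteField.pow_card_sub_one_eq_one _ (sub_ne_zero.mpr (mem_filter.mp hw).2)

theorem exists_mul_pow_sub_eq_one_of_mem_deltaSet {q : ℕ} (hq : 0 < q) {a : F}
    (ha : a ∈ deltaSet q) : ∃ z : F, a * z ^ q - z = 1 := by
  obtain ⟨w, hw, rfl⟩ := mem_image.mp ha
  have ht : w ^ q - w ≠ 0 := sub_ne_zero.mpr (mem_filter.mp hw).2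
  refine ⟨w / (w ^ q - w), mul_left_cancel₀ ht ?_⟩
  rw [← mul_pow_sub_mul_eq hq, mul_div_cancel₀ _ ht, mul_one]

theorem mem_deltaSet_of_mul_pow_sub_eq_one {q : ℕ} (hq : 0 < q) {s z : F} (hs : s ≠ 0)
    (h : s ^ (q - 1) * z ^ q - z = 1) : s ^ (q - 1) ∈ deltaSet q := by
  have hw : (s * z) ^ q - s * z = s := by rw [mul_pow_sub_mul_eq hq, h, mul_one]
  refine mem_image.mpr ⟨s * z, mem_filter.mpr ⟨mem_univ _, ?_⟩, by rw [hw]⟩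
  rw [← sub_ne_zero, hw]
  exact hs

theorem card_filter_mul_pow_sub_eq_zero {q : ℕ} (hq : 0 < q) {s : F} (hs : s ≠ 0) :
    #{z : F | s ^ (q - 1) * z ^ q - z = 0} = #{c : F | c ^ q = c} := by
  refine card_nbij' (s * ·) (s⁻¹ * ·) ?_ ?_ ?_ ?_
  · intro z hz
    simp_all [← sub_eq_zero (a := (s * z) ^ q), mul_pow_sub_mul_eq hq]
  · intro c hc
    have : s * (s ^ (q - 1) * (s⁻¹ * c) ^ q - s⁻¹ * c) = 0 := by
      rw [← mul_pow_sub_mul_eq hq, mul_inv_cancel_left₀ hs, sub_eq_zero]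
      simpa using hc
    simpa [hs] using this
  · intro z _
    simp [hs]
  · intro c _
    simp [hs]

theorem filter_one_add_div_pow_eq {q : ℕ} (hq : q ≠ 0) (a : F) :
    ({z ∈ {z | z ≠ 0} | (1 + z) / z ^ q = a} : Finset F) =
      ({z | a * z ^ q - z = 1} : Finset F) := by
  ext z
  simp only [mem_filter, mem_univ, true_and]
  constructor
  · rintro ⟨hz, rfl⟩
    rw [div_mul_cancel₀ _ (pow_ne_zero _ hz), add_sub_cancel_right]
  · intro h
    have hz : z ≠ 0 := by rintro rfl; simp [hq] at h
    refine ⟨hz, (div_eq_iff (pow_ne_zero _ hz)).mpr ?_⟩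
    linear_combination -h

theorem sum_solCount {q : ℕ} (hq : q ≠ 0) : ∑ a : F, solCount q a = Fintype.card F - 1 := by
  rw [← card_univ, ← card_erase_of_mem (mem_univ 0), ← filter_ne', card_eq_sum_card_fiberwise
    (f := fun z : F => (1 + z) / z ^ q) (t := univ) (fun _ _ => mem_univ _)]
  simp only [filter_one_add_div_pow_eq hq, solCount]

theorem prod_X_sub_C_one_add_div_pow {q : ℕ} (hq : q ≠ 0) :
    ∏ z : F with z ≠ 0, (X - C ((1 + z) / z ^ q)) = ∏ a : F, (X - C a) ^ solCount q a := by
  rw [← prod_fiberwise' _ (fun z : F => (1 + z) / z ^ q) (fun a => X - C a)]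
  simp only [prod_const, filter_one_add_div_pow_eq hq, solCount]

variable {p : ℕ} [ExpChar F p]

theorem prod_neg_pow_expChar_pow (m : ℕ) : ∏ z : F with z ≠ 0, -z ^ p ^ m = -1 := by
  calc ∏ z : F with z ≠ 0, -z ^ p ^ m = ∏ z : F with z ≠ 0, (-z) ^ p ^ m := by
        refine prod_congr rfl fun z _ => ?_
        rw [neg_pow, neg_one_pow_expChar_pow, neg_one_mul]
    _ = ∏ z : F with z ≠ 0, z ^ p ^ m :=
        prod_nbij' (- ·) (- ·) (by simp) (by simp) (by simp) (by simp) (by simp)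
    _ = -1 := by rw [prod_pow, FiniteField.prod_filter_ne_zero_id, neg_one_pow_expChar_pow]

theorem prod_C_add_sub_C_pow_mul_X (m : ℕ) :
    ∏ z : F with z ≠ 0, (C (1 + z) - C (z ^ p ^ m) * X) =
      -∏ a : F, (X - C a) ^ solCount (p ^ m) a := by
  have hfactor : ∀ z : F, z ≠ 0 →
      C (1 + z) - C (z ^ p ^ m) * X = C (-z ^ p ^ m) * (X - C ((1 + z) / z ^ p ^ m)) := by
    intro z hz
    rw [mul_sub, ← C_mul, neg_mul, mul_div_cancel₀ _ (pow_ne_zero _ hz), C_neg, C_neg]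
    ring
  rw [prod_congr rfl fun z hz => hfactor z (mem_filter.mp hz).2, prod_mul_distrib, ← map_prod,
    prod_neg_pow_expChar_pow, prod_X_sub_C_one_add_div_pow (pow_ne_zero _ (expChar_pos F p).ne'),
    map_neg, map_one, neg_one_mul]

theorem solCount_eq_card_filter_eq_zero {m : ℕ} {a : F} (h : ∃ z, a * z ^ p ^ m - z = 1) :
    solCount (p ^ m) a = #{z : F | a * z ^ p ^ m - z = 0} := by
  obtain ⟨z₀, hz₀⟩ := h
  exact AddMonoidHom.card_fiber_eq_of_mem_range (twistedArtinSchreier p m a) ⟨z₀, hz₀⟩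
    ⟨0, map_zero _⟩

theorem solCount_eq_one_of_pow_ne_one {m e : ℕ} (he : e * (p ^ m - 1) = Fintype.card F - 1)
    {a : F} (ha : a ^ e ≠ 1) : solCount (p ^ m) a = 1 := by
  set L := twistedArtinSchreier p m a
  have hinj : Function.Injective L := by
    refine (injective_iff_map_eq_zero L).mpr fun z hz => ?_
    by_contra hz0
    exact ha (FiniteField.pow_eq_one_of_mul_pow_eq_self he hz0 (sub_eq_zero.mp hz))
  obtain ⟨z₀, hz₀⟩ := Finite.injective_iff_surjective.mp hinj 1
  exact card_eq_one.mpr ⟨z₀, by ext z; simpa [L] using hinj.eq_iff' hz₀⟩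

theorem solCount_of_pow_eq_one {m e : ℕ} (he : e * (p ^ m - 1) = Fintype.card F - 1)
    {a : F} (ha : a ^ e = 1) :
    solCount (p ^ m) a = if a ∈ deltaSet (p ^ m) then p ^ m else 0 := by
  have hdvd : p ^ m - 1 ∣ Fintype.card F - 1 := ⟨e, by rw [← he, mul_comm]⟩
  have hq : 0 < p ^ m := by have := FiniteField.pos_of_dvd_card_sub_one hdvd; omega
  obtain ⟨s, hs, rfl⟩ := FiniteField.exists_pow_eq_of_pow_eq_one
    (FiniteField.pos_of_dvd_card_sub_one ⟨p ^ m - 1, he.symm⟩) (by rw [mul_comm, he]) ha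
  split_ifs with hΔ
  · rw [solCount_eq_card_filter_eq_zero (exists_mul_pow_sub_eq_one_of_mem_deltaSet hq hΔ),
      card_filter_mul_pow_sub_eq_zero hq hs, FiniteField.card_filter_pow_eq_self hdvd]
  · exact card_eq_zero.mpr (filter_eq_empty_iff.mpr fun z _ hz =>
      hΔ (mem_deltaSet_of_mul_pow_sub_eq_one hq hs hz))

theorem solCount_eq {m e : ℕ} (he : e * (p ^ m - 1) = Fintype.card F - 1) (a : F) :
    solCount (p ^ m) a =
      (if a ^ e = 1 then 0 else 1) + if a ∈ deltaSet (p ^ m) then p ^ m else 0 := by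
  by_cases ha : a ^ e = 1
  · rw [if_pos ha, zero_add, solCount_of_pow_eq_one he ha]
  · rw [if_neg ha, if_neg fun hΔ => ha (pow_eq_one_of_mem_deltaSet he hΔ),
      solCount_eq_one_of_pow_ne_one he ha]

theorem prod_X_sub_C_pow_solCount {m e : ℕ} (he : e * (p ^ m - 1) = Fintype.card F - 1) :
    ∏ a : F, (X - C a) ^ solCount (p ^ m) a =
      (∏ a : F with a ^ e ≠ 1, (X - C a)) * ∏ u ∈ deltaSet (p ^ m), (X - C u) ^ p ^ m := by
  simp only [solCount_eq he, pow_add, prod_mul_distrib, pow_ite, pow_zero, pow_one, prod_filter,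
    prod_ite_mem, univ_inter, ne_eq, ite_not]

theorem mul_card_deltaSet {m e : ℕ} (he : e * (p ^ m - 1) = Fintype.card F - 1) :
    p ^ m * #(deltaSet (p ^ m) : Finset F) = e - 1 := by
  have hsum : #{a : F | ¬a ^ e = 1} + p ^ m * #(deltaSet (p ^ m) : Finset F) =
      Fintype.card F - 1 := by
    rw [← sum_solCount (pow_ne_zero m (expChar_pos F p).ne')]
    simp only [solCount_eq he, sum_add_distrib, card_filter, ite_not, sum_ite_mem, univ_inter,
      sum_const, smul_eq_mul, mul_comm]
  have hsplit := card_filter_add_card_filter_not (s := (univ : Finset F)) (· ^ e = 1)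
  rw [card_univ, FiniteField.card_filter_pow_eq_one ⟨p ^ m - 1, he.symm⟩] at hsplit
  omega

end FrobeniusDifference

theorem stmt_9_general (p m : ℕ) (hp : p.Prime) (q : ℕ) (hq : q = p ^ m)
    (n : ℕ) (F : Type) [Field F] [Fintype F] [DecidableEq F]
    (hF : Fintype.card F = q ^ n) :
    (Finset.image (fun w : F => (w ^ q - w) ^ (q - 1))
        (Finset.univ.filter fun w : F => w ^ q ≠ w)).card = (q ^ (n - 1) - 1) / (q - 1) ∧
    ∏ z ∈ Finset.univ.filter (fun z : F => z ≠ 0), (C (1 + z) - C (z ^ q) * X) =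
      -((X ^ q ^ n - X) /ₘ (X ^ ((q ^ n - 1) / (q - 1)) - 1)) *
        ∏ u ∈ Finset.image (fun w : F => (w ^ q - w) ^ (q - 1))
            (Finset.univ.filter fun w : F => w ^ q ≠ w), (X - C u) ^ q := by
  have : Fact p.Prime := ⟨hp⟩
  have : CharP F p := charP_of_card_eq_prime_pow (f := m * n) (by rw [hF, hq, pow_mul])
  have hcard := Fintype.one_lt_card (α := F)
  obtain ⟨k, rfl⟩ : ∃ k, n = k + 1 :=
    Nat.exists_eq_add_one_of_ne_zero (by rintro rfl; rw [pow_zero] at hF; omega)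
  have hq2 : 2 ≤ q := by
    by_contra h
    have : q ^ (k + 1) ≤ 1 := pow_le_one₀ (Nat.zero_le _) (by omega)
    omega
  subst hq
  have he : ((p ^ m) ^ (k + 1) - 1) / (p ^ m - 1) * (p ^ m - 1) = Fintype.card F - 1 := by
    rw [hF]
    exact Nat.div_mul_cancel (by simpa using Nat.sub_dvd_pow_sub_pow (p ^ m) 1 (k + 1))
  change #(deltaSet (p ^ m)) = _ ∧ _ = _ * ∏ u ∈ deltaSet (p ^ m), _
  refine ⟨Nat.eq_of_mul_eq_mul_left (by omega : 0 < p ^ m) ?_, ?_⟩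
  · rw [mul_card_deltaSet he, Nat.pow_succ_sub_one_div hq2, Nat.add_sub_cancel, Nat.add_sub_cancel]
  · have hquot := FiniteField.X_pow_card_sub_X_divByMonic (F := F) ⟨p ^ m - 1, he.symm⟩
    rw [hF] at hquot
    rw [prod_C_add_sub_C_pow_mul_X, prod_X_sub_C_pow_solCount he, hquot, neg_mul]

/-- Lemma 8.2: with `Δ = {(w^q - w)^{q-1} : w ∈ F_{q^n} \ F_q}` one has
`|Δ| = (q^{n-1}-1)/(q-1)` and
`∏_{z ∈ F_{q^n}^*} (1 + z - z^q Y) = -((Y^{q^n} - Y)/(Y^{(q^n-1)/(q-1)} - 1)) ∏_{u ∈ Δ} (Y-u)^q`,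
the quotient being exact polynomial division (`/ₘ`). -/
theorem stmt_9 (p m : ℕ) (hp : p.Prime) (hm : 0 < m) (q : ℕ) (hq : q = p ^ m)
    (n : ℕ) (hn : 0 < n) (F : Type) [Field F] [Fintype F] [DecidableEq F]
    (hF : Fintype.card F = q ^ n) :
    (Finset.image (fun w : F => (w ^ q - w) ^ (q - 1))
        (Finset.univ.filter fun w : F => w ^ q ≠ w)).card = (q ^ (n - 1) - 1) / (q - 1) ∧
    ∏ z ∈ Finset.univ.filter (fun z : F => z ≠ 0), (C (1 + z) - C (z ^ q) * X) =
      -((X ^ q ^ n - X) /ₘ (X ^ ((q ^ n - 1) / (q - 1)) - 1)) *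
        ∏ u ∈ Finset.image (fun w : F => (w ^ q - w) ^ (q - 1))
            (Finset.univ.filter fun w : F => w ^ q ≠ w), (X - C u) ^ q :=
  stmt_9_general p m hp q hq n F hF
end
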